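/- Let (M, d) be a proper geodesic metric space and let γ be a line in M with the uniqueness property. If γ₁ and γ₂ are lines with γ₁ ≺ γ and γ₂ ≺ γ, and there exists t₀ ∈ ℝ with B_{γ₁}(γ₂(t₀)) = 0, then γ₂ ≺ γ₁. -/
import Mathlib


open Filter Topology

variable {M : Type*} [MetricSpace M]

/-- A ray in a metric space: a map `γ` defined (in effect) on `[0, ∞)` with
`d(γ s, γ t) = |s - t|` for all `s, t ≥ 0`. -/
def IsRay (γ : ℝ → M) : Prop :=
  ∀ s t : ℝ, 0 ≤ s → 0 ≤ t → dist (γ s) (γ t) = |s - t|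

/-- A line in a metric space: a map `γ : ℝ → M` with `d(γ s, γ t) = |s - t|`. -/
def IsLine (γ : ℝ → M) : Prop :=
  ∀ s t : ℝ, dist (γ s) (γ t) = |s - t|

/-- The Busemann function of a ray `γ`:
`b_γ(x) = lim_{t → ∞} (d(x, γ t) - t)`, which exists and equals the infimum
since `t ↦ d(x, γ t) - t` is nonincreasing on `[0, ∞)` and bounded below. -/
noncomputable def busemann (γ : ℝ → M) (x : M) : ℝ :=
  ⨅ t : Set.Ici (0 : ℝ), (dist x (γ t) - (t : ℝ))

/-- For a line `γ`, the negative ray `γ⁻(t) = γ(-t)`.  (The positive ray `γ⁺`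
is just `γ` itself, restricted to `[0, ∞)`.) -/
def negRay (γ : ℝ → M) : ℝ → M := fun t => γ (-t)

/-- The barrier function of a line `γ`: `B_γ = b_{γ⁺} + b_{γ⁻}`. -/
noncomputable def barrier (γ : ℝ → M) (x : M) : ℝ :=
  busemann γ x + busemann (negRay γ) x

/-- `γ' ≺ γ`: the barrier of `γ` vanishes at `γ' 0` and both Busemann functions
`b_{γ⁺}`, `b_{γ⁻}` calibrate `γ'` (every forward translate of `γ'` is a coray to
`γ⁺` and every backward translate is a coray to `γ⁻`). -/
def Prec (γ' γ : ℝ → M) : Prop :=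
  busemann γ (γ' 0) + busemann (negRay γ) (γ' 0) = 0 ∧
  ∀ t : ℝ, busemann γ (γ' t) = busemann γ (γ' 0) - t ∧
    busemann (negRay γ) (γ' t) = busemann (negRay γ) (γ' 0) + t

/-- A geodesic metric space: any two points are joined by a minimizing geodesic
segment. -/
def IsGeodesicSpace (M : Type*) [MetricSpace M] : Prop :=
  ∀ x y : M, ∃ σ : ℝ → M, σ 0 = x ∧ σ (dist x y) = y ∧
    ∀ s t : ℝ, s ∈ Set.Icc 0 (dist x y) → t ∈ Set.Icc 0 (dist x y) →
      dist (σ s) (σ t) = |s - t|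

/-- `γ'` is a coray to the ray `γ`: there are `tᵢ → ∞`, points `xᵢ → γ' 0` and
minimal geodesic segments `cᵢ` from `xᵢ` to `γ (tᵢ)` of length `Tᵢ = d(xᵢ, γ tᵢ) → ∞`
converging to `γ'` uniformly on compact subintervals of `[0, ∞)`. -/
def IsCoray (γ' γ : ℝ → M) : Prop :=
  ∃ (t : ℕ → ℝ) (x : ℕ → M) (c : ℕ → ℝ → M),
    (∀ i, 0 ≤ t i) ∧
    Tendsto t atTop atTop ∧
    Tendsto x atTop (𝓝 (γ' 0)) ∧
    (∀ i, c i 0 = x i) ∧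
    (∀ i, c i (dist (x i) (γ (t i))) = γ (t i)) ∧
    (∀ i, ∀ s s' : ℝ, s ∈ Set.Icc 0 (dist (x i) (γ (t i))) →
      s' ∈ Set.Icc 0 (dist (x i) (γ (t i))) → dist (c i s) (c i s') = |s - s'|) ∧
    Tendsto (fun i => dist (x i) (γ (t i))) atTop atTop ∧
    (∀ K > (0 : ℝ), ∀ ε > (0 : ℝ), ∃ N : ℕ, ∀ i ≥ N,
      ∀ s ∈ Set.Icc (0 : ℝ) K, dist (c i s) (γ' s) < ε)

/-- The line `γ` has the uniqueness property: through each point of the zero set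
of `B_γ` there is at most one line `γ''` with `γ'' ≺ γ`. -/
def HasUniqueCalibLine (γ : ℝ → M) : Prop :=
  ∀ x : M, barrier γ x = 0 →
    ∀ γ₁ γ₂ : ℝ → M, IsLine γ₁ → IsLine γ₂ → γ₁ 0 = x → γ₂ 0 = x →
      Prec γ₁ γ → Prec γ₂ γ → γ₁ = γ₂


section Aux

variable {M : Type*} [MetricSpace M]

private lemma isRay_of_isLine {γ : ℝ → M} (h : IsLine γ) : IsRay γ := fun s t _ _ => h s t

private lemma negRay_negRay (γ : ℝ → M) : negRay (negRay γ) = γ := by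
  funext t; simp [negRay]

private lemma isRay_negRay {γ : ℝ → M} (h : IsLine γ) : IsRay (negRay γ) := by
  intro s t _ _
  rw [negRay, negRay, h (-s) (-t), abs_sub_comm]
  congr 1; ring

private lemma isLine_negRay {γ : ℝ → M} (h : IsLine γ) : IsLine (negRay γ) := by
  intro s t
  rw [negRay, negRay, h (-s) (-t), abs_sub_comm]
  congr 1; ring

private lemma busemann_bddBelow {γ : ℝ → M} (h : IsRay γ) (x : M) :
    BddBelow (Set.range fun t : Set.Ici (0:ℝ) => dist x (γ t) - (t:ℝ)) := by
  refine ⟨-dist x (γ 0), ?_⟩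
  rintro _ ⟨⟨t, ht⟩, rfl⟩
  rw [Set.mem_Ici] at ht
  have h0 := h 0 t le_rfl ht
  rw [abs_of_nonpos (by linarith : (0:ℝ) - t ≤ 0)] at h0
  have htri := dist_triangle (γ 0) x (γ t)
  rw [dist_comm (γ 0) x] at htri
  simp only
  linarith

private lemma busemann_le {γ : ℝ → M} (h : IsRay γ) (x : M) {t : ℝ} (ht : 0 ≤ t) :
    busemann γ x ≤ dist x (γ t) - t :=
  ciInf_le (busemann_bddBelow h x) ⟨t, ht⟩

private lemma le_busemann {γ : ℝ → M} {x : M} {c : ℝ}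
    (h : ∀ t : ℝ, 0 ≤ t → c ≤ dist x (γ t) - t) : c ≤ busemann γ x :=
  le_ciInf fun t => h t t.2

private lemma busemann_le_add {γ : ℝ → M} (h : IsRay γ) (x y : M) :
    busemann γ x ≤ busemann γ y + dist x y := by
  have key : busemann γ x - dist x y ≤ busemann γ y := by
    apply le_busemann
    intro t ht
    have h1 := busemann_le h x ht
    have h2 := dist_triangle x y (γ t)
    linarith
  linarith

private lemma busemann_line_self {γ : ℝ → M} (h : IsLine γ) (s : ℝ) :
    busemann γ (γ s) = -s := by
  apply le_antisymm
  · have h1 := busemann_le (isRay_of_isLine h) (γ s) (abs_nonneg s)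
    rw [h s |s|, abs_sub_comm, abs_of_nonneg (sub_nonneg.2 (le_abs_self s))] at h1
    linarith
  · apply le_busemann
    intro t ht
    rw [h s t]
    have := neg_abs_le (s - t)
    linarith

private lemma barrier_nonneg {γ : ℝ → M} (h : IsLine γ) (x : M) :
    0 ≤ busemann γ x + busemann (negRay γ) x := by
  have key : -busemann γ x ≤ busemann (negRay γ) x := by
    apply le_busemann
    intro u hu
    have key2 : u - dist x (negRay γ u) ≤ busemann γ x := by
      apply le_busemann
      intro t ht
      have hd : dist (γ t) (negRay γ u) = t + u := by
        rw [negRay, h t (-u), abs_of_nonneg (by linarith : (0:ℝ) ≤ t - -u)]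
        ring
      have htri := dist_triangle (γ t) x (negRay γ u)
      rw [dist_comm (γ t) x] at htri
      linarith
    linarith
  linarith

private lemma busemann_term_antitone {γ : ℝ → M} (h : IsRay γ) (x : M) {s t : ℝ}
    (hs : 0 ≤ s) (hst : s ≤ t) : dist x (γ t) - t ≤ dist x (γ s) - s := by
  have hd := h s t hs (hs.trans hst)
  rw [abs_of_nonpos (by linarith : s - t ≤ 0)] at hd
  have htri := dist_triangle x (γ s) (γ t)
  linarith

private lemma tendsto_busemann_nat {γ : ℝ → M} (h : IsRay γ) (p : M) :
    Filter.Tendsto (fun n : ℕ => dist p (γ n) - (n:ℝ)) atTop (𝓝 (busemann γ p)) := by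
  have hanti : Antitone fun n : ℕ => dist p (γ n) - (n:ℝ) := fun m n hmn =>
    busemann_term_antitone h p (Nat.cast_nonneg m) (by exact_mod_cast hmn)
  have hbdd : BddBelow (Set.range fun n : ℕ => dist p (γ n) - (n:ℝ)) := by
    refine ⟨busemann γ p, ?_⟩
    rintro _ ⟨n, rfl⟩
    exact busemann_le h p (Nat.cast_nonneg n)
  have htend := tendsto_atTop_ciInf hanti hbdd
  have heq : (⨅ n : ℕ, (dist p (γ n) - (n:ℝ))) = busemann γ p := by
    apply le_antisymm
    · apply le_busemann
      intro t ht
      refine ciInf_le_of_le hbdd ⌈t⌉₊ ?_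
      exact busemann_term_antitone h p ht (Nat.le_ceil t)
    · exact le_ciInf fun n => busemann_le h p (Nat.cast_nonneg n)
  rwa [heq] at htend

/-- If the busemann function of ray `ρ` is calibrated along the line `γ'`, then
`b_ρ(x) - b_ρ(γ' 0) ≤ b_{γ'}(x)`. -/
private lemma busemann_ge_of_calibrated {ρ γ' : ℝ → M} (hρ : IsRay ρ)
    (hcal : ∀ u : ℝ, busemann ρ (γ' u) = busemann ρ (γ' 0) - u) (x : M) :
    busemann ρ x - busemann ρ (γ' 0) ≤ busemann γ' x := by
  apply le_busemann
  intro t ht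
  have h1 := busemann_le_add hρ x (γ' t)
  rw [hcal t] at h1
  linarith

private lemma min_lip (L a b : ℝ) : |min a L - min b L| ≤ |a - b| := by
  rcases le_total a L with h|h <;> rcases le_total b L with h'|h'
  · rw [min_eq_left h, min_eq_left h']
  · rw [min_eq_left h, min_eq_right h', abs_sub_le_iff]
    constructor <;> linarith [le_abs_self (a-b), neg_abs_le (a-b), abs_nonneg (a-b)]
  · rw [min_eq_right h, min_eq_left h', abs_sub_le_iff]
    constructor <;> linarith [le_abs_self (a-b), neg_abs_le (a-b), abs_nonneg (a-b)]
  · rw [min_eq_right h, min_eq_right h']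
    simp [abs_nonneg]

private lemma clamp_lip (L : ℝ) (s t : ℝ) :
    |min (max s 0) L - min (max t 0) L| ≤ |s - t| :=
  (min_lip L (max s 0) (max t 0)).trans (abs_max_sub_max_le_abs s t 0)

/-- Asymptote construction: in a proper geodesic space, from any point `p` there is
a ray `σ` which is a coray to the ray `γ₁`, along which the Busemann function of `γ₁`
decreases at unit speed starting from its value at `p`. -/
private lemma exists_asymptote [ProperSpace M] (hM : IsGeodesicSpace M)
    {γ₁ : ℝ → M} (h₁ : IsRay γ₁) (p : M) :
    ∃ σ : ℝ → M, σ 0 = p ∧ IsRay σ ∧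
      ∀ s : ℝ, 0 ≤ s → busemann γ₁ (σ s) = busemann γ₁ p - s := by
  choose c hc0 hcL hciso using fun n : ℕ => hM p (γ₁ n)
  set L : ℕ → ℝ := fun n => dist p (γ₁ n) with hLdef
  have hL0 : ∀ n, 0 ≤ L n := fun n => dist_nonneg
  set e : ℕ → ℝ → M := fun n s => c n (min (max s 0) (L n)) with hedef
  have hmem0 : ∀ (n : ℕ), (0:ℝ) ∈ Set.Icc 0 (L n) := fun n => ⟨le_rfl, hL0 n⟩
  have hclamp_mem : ∀ (n : ℕ) (s : ℝ), min (max s 0) (L n) ∈ Set.Icc 0 (L n) := by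
    intro n s
    exact ⟨le_min (le_max_right s 0) (hL0 n), min_le_right _ _⟩
  have hclamp_id : ∀ (n : ℕ) (s : ℝ), 0 ≤ s → s ≤ L n → min (max s 0) (L n) = s := by
    intro n s hs hsL
    rw [max_eq_left hs, min_eq_left hsL]
  have he_eq : ∀ (n : ℕ) (s : ℝ), 0 ≤ s → s ≤ L n → e n s = c n s := by
    intro n s hs hsL
    rw [hedef]; simp only
    rw [hclamp_id n s hs hsL]
  have he0 : ∀ n : ℕ, e n 0 = p := by
    intro n
    rw [he_eq n 0 le_rfl (hL0 n)]
    exact hc0 n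
  have hedist : ∀ (n : ℕ) (s t : ℝ),
      dist (e n s) (e n t) = |min (max s 0) (L n) - min (max t 0) (L n)| := by
    intro n s t
    exact (hciso n) _ _ (hclamp_mem n s) (hclamp_mem n t)
  have helip : ∀ (n : ℕ) (s t : ℝ), dist (e n s) (e n t) ≤ |s - t| := by
    intro n s t
    rw [hedist]
    exact clamp_lip (L n) s t
  have hedist_p : ∀ (n : ℕ) (s : ℝ), dist (e n s) p ≤ |s| := by
    intro n s
    have h1 : dist (e n s) (e n 0) ≤ |s - 0| := helip n s 0
    rw [he0 n] at h1
    simpa using h1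
  -- L n → ∞
  have hLtop : Filter.Tendsto L atTop atTop := by
    have hlb : ∀ n : ℕ, (n : ℝ) - dist p (γ₁ 0) ≤ L n := by
      intro n
      have hd := h₁ 0 n le_rfl (Nat.cast_nonneg n)
      rw [abs_of_nonpos (by simp : (0:ℝ) - n ≤ 0)] at hd
      have htri := dist_triangle (γ₁ 0) p (γ₁ n)
      rw [dist_comm (γ₁ 0) p] at htri
      simp only [hLdef]
      linarith
    have h2 : Filter.Tendsto (fun n : ℕ => (n : ℝ) - dist p (γ₁ 0)) atTop atTop := by
      simpa [sub_eq_add_neg] using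
        Filter.tendsto_atTop_add_const_right atTop (-(dist p (γ₁ 0)))
          (tendsto_natCast_atTop_atTop (R := ℝ))
    exact Filter.tendsto_atTop_mono hlb h2
  -- compactness extraction
  set S : Set (ℚ → M) := Set.univ.pi fun q : ℚ => Metric.closedBall p |(q:ℝ)| with hSdef
  have hScomp : IsCompact S := isCompact_univ_pi fun q => isCompact_closedBall p _
  have hmemS : ∀ n : ℕ, (fun q : ℚ => e n (q:ℝ)) ∈ S := by
    intro n
    rw [hSdef, Set.mem_univ_pi]
    intro q
    rw [Metric.mem_closedBall]
    exact hedist_p n q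
  obtain ⟨f, _, φ, hφ, hconv⟩ := hScomp.tendsto_subseq hmemS
  have hq : ∀ q : ℚ, Filter.Tendsto (fun k => e (φ k) (q:ℝ)) atTop (𝓝 (f q)) := by
    intro q
    exact tendsto_pi_nhds.mp hconv q
  -- pointwise limits
  have hcauchy : ∀ s : ℝ, ∃ y, Filter.Tendsto (fun k => e (φ k) s) atTop (𝓝 y) := by
    intro s
    apply cauchySeq_tendsto_of_complete
    rw [Metric.cauchySeq_iff]
    intro ε hε
    obtain ⟨q, hqnear⟩ := exists_rat_near s (by linarith : (0:ℝ) < ε/3)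
    have hcq : CauchySeq (fun k => e (φ k) (q:ℝ)) := (hq q).cauchySeq
    rw [Metric.cauchySeq_iff] at hcq
    obtain ⟨N, hN⟩ := hcq (ε/3) (by linarith)
    refine ⟨N, fun m hm n hn => ?_⟩
    have h1 : dist (e (φ m) s) (e (φ m) (q:ℝ)) ≤ |s - q| := helip _ s q
    have h2 : dist (e (φ n) (q:ℝ)) (e (φ n) s) ≤ |(q:ℝ) - s| := helip _ q s
    rw [abs_sub_comm] at h2
    have h3 := hN m hm n hn
    have htri1 := dist_triangle (e (φ m) s) (e (φ m) (q:ℝ)) (e (φ n) s)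
    have htri2 := dist_triangle (e (φ m) (q:ℝ)) (e (φ n) (q:ℝ)) (e (φ n) s)
    linarith
  choose σ hσ using hcauchy
  have hφtop : Filter.Tendsto φ atTop atTop := hφ.tendsto_atTop
  have hLφtop : Filter.Tendsto (fun k => L (φ k)) atTop atTop := hLtop.comp hφtop
  have hσ0 : σ 0 = p := by
    have h1 : (fun k => e (φ k) 0) = fun _ => p := funext fun k => he0 (φ k)
    have h2 := hσ 0
    rw [h1] at h2
    exact tendsto_nhds_unique h2 tendsto_const_nhds
  refine ⟨σ, hσ0, ?_, ?_⟩
  · -- IsRay σ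
    intro s t hs ht
    have hev : ∀ᶠ k in atTop, dist (e (φ k) s) (e (φ k) t) = |s - t| := by
      filter_upwards [hLφtop.eventually_ge_atTop (max s t)] with k hk
      rw [hedist, hclamp_id _ s hs (le_trans (le_max_left s t) hk),
        hclamp_id _ t ht (le_trans (le_max_right s t) hk)]
    have h1 : Filter.Tendsto (fun k => dist (e (φ k) s) (e (φ k) t)) atTop
        (𝓝 (dist (σ s) (σ t))) := (hσ s).dist (hσ t)
    have h2 : Filter.Tendsto (fun k => dist (e (φ k) s) (e (φ k) t)) atTop (𝓝 (|s - t|)) := by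
      rw [Filter.tendsto_congr' hev]
      exact tendsto_const_nhds
    exact tendsto_nhds_unique h1 h2
  · -- busemann along σ
    intro s hs
    have hdps : dist p (σ s) ≤ s := by
      have h1 : Filter.Tendsto (fun k => dist (e (φ k) s) p) atTop (𝓝 (dist (σ s) p)) :=
        (hσ s).dist tendsto_const_nhds
      have h2 : ∀ᶠ k in atTop, dist (e (φ k) s) p ≤ s := by
        filter_upwards with k
        have := hedist_p (φ k) s
        rwa [abs_of_nonneg hs] at this
      rw [dist_comm]
      exact le_of_tendsto h1 h2
    have hup : busemann γ₁ (σ s) ≤ busemann γ₁ p - s := by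
      have hev : ∀ᶠ k in atTop,
          busemann γ₁ (σ s) ≤ dist (σ s) (e (φ k) s) + (L (φ k) - (φ k : ℝ)) - s := by
        filter_upwards [hLφtop.eventually_ge_atTop s] with k hk
        have hb := busemann_le h₁ (σ s) (Nat.cast_nonneg (φ k))
        have hseg : dist (e (φ k) s) (γ₁ (φ k)) = L (φ k) - s := by
          rw [he_eq _ s hs hk, ← hcL (φ k)]
          rw [(hciso (φ k)) s (L (φ k)) ⟨hs, hk⟩ ⟨hL0 _, le_rfl⟩,
            abs_of_nonpos (by linarith : s - L (φ k) ≤ 0)]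
          ring
        have htri := dist_triangle (σ s) (e (φ k) s) (γ₁ (φ k))
        rw [hseg] at htri
        linarith
      have hrhs : Filter.Tendsto
          (fun k => dist (σ s) (e (φ k) s) + (L (φ k) - (φ k : ℝ)) - s) atTop
          (𝓝 (0 + busemann γ₁ p - s)) := by
        have ht1 : Filter.Tendsto (fun k => dist (σ s) (e (φ k) s)) atTop (𝓝 0) := by
          have hc : Filter.Tendsto (fun _ : ℕ => σ s) atTop (𝓝 (σ s)) := tendsto_const_nhds
          have := hc.dist (hσ s)
          simpa using this
        have ht2 : Filter.Tendsto (fun k => L (φ k) - (φ k : ℝ)) atTop (𝓝 (busemann γ₁ p)) :=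
          (tendsto_busemann_nat h₁ p).comp hφtop
        exact ((ht1.add ht2).sub tendsto_const_nhds)
      have hge : busemann γ₁ (σ s) ≤ 0 + busemann γ₁ p - s :=
        ge_of_tendsto hrhs hev
      linarith
    have hlow : busemann γ₁ p - s ≤ busemann γ₁ (σ s) := by
      have := busemann_le_add h₁ p (σ s)
      linarith
    linarith

/-- Reversal preserves `Prec`. -/
private lemma prec_negRay {γ' γ : ℝ → M} (h : Prec γ' γ) : Prec (negRay γ') (negRay γ) := by
  obtain ⟨h0, hcal⟩ := h
  have hz : negRay γ' 0 = γ' 0 := by simp [negRay]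
  have hnn : busemann (negRay (negRay γ)) = busemann γ := by rw [negRay_negRay]
  constructor
  · rw [hz, hnn]
    linarith [h0]
  · intro t
    have h1 := (hcal (-t)).1
    have h2 := (hcal (-t)).2
    constructor
    · rw [hz]
      show busemann (negRay γ) (γ' (-t)) = _
      rw [h2]; linarith [(hcal 0).2]
    · rw [hz, hnn]
      show busemann γ (γ' (-t)) = _
      rw [h1]; linarith [(hcal 0).1]

private lemma hasUnique_negRay {γ : ℝ → M} (h : HasUniqueCalibLine γ) :
    HasUniqueCalibLine (negRay γ) := by
  intro x hbar L₁ L₂ hL₁ hL₂ h10 h20 hp1 hp2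
  have hbar' : barrier γ x = 0 := by
    unfold barrier at hbar ⊢
    rw [negRay_negRay] at hbar
    linarith
  have e1 : negRay L₁ = negRay L₂ := by
    refine h x hbar' (negRay L₁) (negRay L₂) (isLine_negRay hL₁) (isLine_negRay hL₂)
      (by simpa [negRay] using h10) (by simpa [negRay] using h20) ?_ ?_
    · have := prec_negRay hp1
      rwa [negRay_negRay] at this
    · have := prec_negRay hp2
      rwa [negRay_negRay] at this
  funext t
  have := congrFun e1 (-t)
  simpa [negRay] using this

/-- Main half lemma: under the hypotheses, the Busemann function of `γ₁`
is calibrated along `γ₂`. -/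
private lemma main_half [ProperSpace M] (hM : IsGeodesicSpace M)
    (γ : ℝ → M) (hγ : IsLine γ) (huniq : HasUniqueCalibLine γ)
    (γ₁ γ₂ : ℝ → M) (h₁ : IsLine γ₁) (h₂ : IsLine γ₂)
    (hp₁ : Prec γ₁ γ) (hp₂ : Prec γ₂ γ)
    (t₀ : ℝ) (hzero : barrier γ₁ (γ₂ t₀) = 0) :
    ∀ t : ℝ, busemann γ₁ (γ₂ t) = busemann γ₁ (γ₂ 0) - t := by
  obtain ⟨h10, hcal1⟩ := hp₁
  obtain ⟨h20, hcal2⟩ := hp₂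
  have hγray := isRay_of_isLine hγ
  have hγnray := isRay_negRay hγ
  have h₁ray := isRay_of_isLine h₁
  have h₁nray := isRay_negRay h₁
  -- abbreviations
  have hz : busemann γ₁ (γ₂ t₀) + busemann (negRay γ₁) (γ₂ t₀) = 0 := hzero
  -- lower bounds along γ₂
  have hlow : ∀ u : ℝ, busemann γ (γ₂ 0) - u - busemann γ (γ₁ 0) ≤ busemann γ₁ (γ₂ u) := by
    intro u
    have h5 := busemann_ge_of_calibrated hγray (fun v => (hcal1 v).1) (γ₂ u)
    rw [(hcal2 u).1] at h5
    linarith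
  have hcaln : ∀ v : ℝ, busemann (negRay γ) (negRay γ₁ v) =
      busemann (negRay γ) (negRay γ₁ 0) - v := by
    intro v
    show busemann (negRay γ) (γ₁ (-v)) = busemann (negRay γ) (γ₁ (-0)) - v
    rw [neg_zero, (hcal1 (-v)).2]
    ring
  have hn10 : negRay γ₁ 0 = γ₁ 0 := by simp [negRay]
  have hlow' : ∀ u : ℝ, busemann (negRay γ) (γ₂ 0) + u - busemann (negRay γ) (γ₁ 0) ≤
      busemann (negRay γ₁) (γ₂ u) := by
    intro u
    have h5 := busemann_ge_of_calibrated hγnray hcaln (γ₂ u)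
    rw [hn10, (hcal2 u).2] at h5
    linarith
  -- equalities at t₀
  have hb1 : busemann γ₁ (γ₂ t₀) =
      busemann γ (γ₂ 0) - t₀ - busemann γ (γ₁ 0) := by
    have l1 := hlow t₀
    have l2 := hlow' t₀
    linarith
  have hb2 : busemann (negRay γ₁) (γ₂ t₀) =
      busemann (negRay γ) (γ₂ 0) + t₀ - busemann (negRay γ) (γ₁ 0) := by
    have l1 := hlow t₀
    have l2 := hlow' t₀
    linarith
  -- the key claim
  have claim : ∀ u : ℝ, busemann γ₁ (γ₂ u) =
      busemann γ (γ₂ 0) - u - busemann γ (γ₁ 0) := by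
    intro u
    rcases le_total u t₀ with hu | hu
    · -- backward direction: Lipschitz bound
      have hub := busemann_le_add h₁ray (γ₂ u) (γ₂ t₀)
      rw [h₂ u t₀, abs_of_nonpos (by linarith : u - t₀ ≤ 0)] at hub
      have l1 := hlow u
      linarith
    · -- forward direction: asymptote + uniqueness
      obtain ⟨σ, hσ0, hσray, hσbus⟩ := exists_asymptote hM h₁ray (γ₂ t₀)
      have hdistσ : ∀ s : ℝ, 0 ≤ s → dist (γ₂ t₀) (σ s) = s := by
        intro s hs
        rw [← hσ0, hσray 0 s le_rfl hs, abs_of_nonpos (by linarith : (0:ℝ) - s ≤ 0)]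
        ring
      -- Busemann functions of γ along σ
      have hbσ : ∀ s : ℝ, 0 ≤ s →
          busemann γ (σ s) = busemann γ (γ₂ 0) - t₀ - s := by
        intro s hs
        have hup : busemann γ (σ s) ≤ busemann γ (γ₂ 0) - t₀ - s := by
          have h5 := busemann_ge_of_calibrated hγray (fun v => (hcal1 v).1) (σ s)
          rw [hσbus s hs, hb1] at h5
          linarith
        have hlo : busemann γ (γ₂ 0) - t₀ - s ≤ busemann γ (σ s) := by
          have hl := busemann_le_add hγray (γ₂ t₀) (σ s)
          rw [hdistσ s hs, (hcal2 t₀).1] at hl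
          linarith
        linarith
      have hbσ' : ∀ s : ℝ, 0 ≤ s →
          busemann (negRay γ) (σ s) = busemann (negRay γ) (γ₂ 0) + t₀ + s := by
        intro s hs
        have hup : busemann (negRay γ) (σ s) ≤ busemann (negRay γ) (γ₂ 0) + t₀ + s := by
          have hl := busemann_le_add hγnray (σ s) (γ₂ t₀)
          rw [dist_comm, hdistσ s hs, (hcal2 t₀).2] at hl
          linarith
        have hlo : busemann (negRay γ) (γ₂ 0) + t₀ + s ≤ busemann (negRay γ) (σ s) := by
          have hbar := barrier_nonneg hγ (σ s)
          have hb := hbσ s hs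
          linarith
        linarith
      -- the concatenated line
      set Lf : ℝ → M := fun v => if 0 ≤ v then σ v else γ₂ (v + t₀) with hLfdef
      have hLf_pos : ∀ v : ℝ, 0 ≤ v → Lf v = σ v := fun v hv => if_pos hv
      have hLf_neg : ∀ v : ℝ, v < 0 → Lf v = γ₂ (v + t₀) := fun v hv => if_neg (not_le.2 hv)
      have hLf0 : Lf 0 = γ₂ t₀ := by rw [hLf_pos 0 le_rfl, hσ0]
      have hmix : ∀ v w : ℝ, v < 0 → 0 ≤ w → dist (γ₂ (v + t₀)) (σ w) = w - v := by
        intro v w hv hw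
        apply le_antisymm
        · have htri := dist_triangle (γ₂ (v + t₀)) (γ₂ t₀) (σ w)
          rw [h₂ (v + t₀) t₀, hdistσ w hw,
            abs_of_nonpos (by linarith : v + t₀ - t₀ ≤ 0)] at htri
          linarith
        · have hl := busemann_le_add hγray (γ₂ (v + t₀)) (σ w)
          rw [(hcal2 (v + t₀)).1, hbσ w hw] at hl
          linarith
      have hLfline : IsLine Lf := by
        intro v w
        rcases le_or_gt 0 v with hv | hv <;> rcases le_or_gt 0 w with hw | hw
        · rw [hLf_pos v hv, hLf_pos w hw]; exact hσray v w hv hw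
        · rw [hLf_pos v hv, hLf_neg w hw, dist_comm, hmix w v hw hv,
            abs_of_nonneg (by linarith : 0 ≤ v - w)]
        · rw [hLf_neg v hv, hLf_pos w hw, hmix v w hv hw,
            abs_of_nonpos (by linarith : v - w ≤ 0)]
          ring
        · rw [hLf_neg v hv, hLf_neg w hw, h₂ (v + t₀) (w + t₀)]
          congr 1; ring
      have hprecLf : Prec Lf γ := by
        have hcalL : ∀ v : ℝ, busemann γ (Lf v) = busemann γ (γ₂ 0) - t₀ - v ∧
            busemann (negRay γ) (Lf v) = busemann (negRay γ) (γ₂ 0) + t₀ + v := by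
          intro v
          rcases le_or_gt 0 v with hv | hv
          · rw [hLf_pos v hv]
            exact ⟨hbσ v hv, hbσ' v hv⟩
          · rw [hLf_neg v hv]
            refine ⟨?_, ?_⟩
            · rw [(hcal2 (v + t₀)).1]; ring
            · rw [(hcal2 (v + t₀)).2]; ring
        constructor
        · have c0 := hcalL 0
          rw [c0.1, c0.2]
          linarith
        · intro v
          have c0 := hcalL 0
          have cv := hcalL v
          constructor
          · rw [cv.1, c0.1]; ring
          · rw [cv.2, c0.2]; ring
      -- the shifted line γ₂'
      set G : ℝ → M := fun v => γ₂ (v + t₀) with hGdef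
      have hGline : IsLine G := by
        intro v w
        show dist (γ₂ (v + t₀)) (γ₂ (w + t₀)) = _
        rw [h₂ (v + t₀) (w + t₀)]
        congr 1; ring
      have hG0 : G 0 = γ₂ t₀ := by show γ₂ (0 + t₀) = γ₂ t₀; rw [zero_add]
      have hprecG : Prec G γ := by
        constructor
        · show busemann γ (γ₂ (0 + t₀)) + busemann (negRay γ) (γ₂ (0 + t₀)) = 0
          rw [(hcal2 (0 + t₀)).1, (hcal2 (0 + t₀)).2]
          linarith
        · intro v
          show busemann γ (γ₂ (v + t₀)) = busemann γ (γ₂ (0 + t₀)) - v ∧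
            busemann (negRay γ) (γ₂ (v + t₀)) = busemann (negRay γ) (γ₂ (0 + t₀)) + v
          rw [(hcal2 (v + t₀)).1, (hcal2 (0 + t₀)).1,
            (hcal2 (v + t₀)).2, (hcal2 (0 + t₀)).2]
          constructor <;> ring
      have hbarp : barrier γ (γ₂ t₀) = 0 := by
        show busemann γ (γ₂ t₀) + busemann (negRay γ) (γ₂ t₀) = 0
        rw [(hcal2 t₀).1, (hcal2 t₀).2]
        linarith
      have heq : Lf = G :=
        huniq (γ₂ t₀) hbarp Lf G hLfline hGline hLf0 hG0 hprecLf hprecG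
      -- conclude
      have hσu : σ (u - t₀) = γ₂ u := by
        have := congrFun heq (u - t₀)
        rw [hLf_pos (u - t₀) (by linarith)] at this
        rw [this, hGdef]
        show γ₂ (u - t₀ + t₀) = γ₂ u
        congr 1; ring
      have := hσbus (u - t₀) (by linarith)
      rw [hσu, hb1] at this
      rw [this]
      ring
  intro t
  rw [claim t, claim 0]
  ring

end Aux

/-- for lines `γ₁ ≺ γ` and `γ₂ ≺ γ` (with `γ` having the uniqueness
property in a proper geodesic space), if `B_{γ₁}` vanishes at some point of `γ₂`,
then `γ₂ ≺ γ₁`. -/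
theorem prec_of_barrier_zero_at_point [ProperSpace M] (hM : IsGeodesicSpace M)
    (γ : ℝ → M) (hγ : IsLine γ) (huniq : HasUniqueCalibLine γ)
    (γ₁ γ₂ : ℝ → M) (h₁ : IsLine γ₁) (h₂ : IsLine γ₂)
    (hp₁ : Prec γ₁ γ) (hp₂ : Prec γ₂ γ)
    (hzero : ∃ t₀ : ℝ, barrier γ₁ (γ₂ t₀) = 0) :
    Prec γ₂ γ₁ := by
  obtain ⟨t₀, hz⟩ := hzero
  have half1 := main_half hM γ hγ huniq γ₁ γ₂ h₁ h₂ hp₁ hp₂ t₀ hz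
  have hz' : barrier (negRay γ₁) (negRay γ₂ (-t₀)) = 0 := by
    have h1 : negRay γ₂ (-t₀) = γ₂ t₀ := by simp [negRay]
    have hzz : busemann γ₁ (γ₂ t₀) + busemann (negRay γ₁) (γ₂ t₀) = 0 := hz
    show busemann (negRay γ₁) (negRay γ₂ (-t₀)) +
      busemann (negRay (negRay γ₁)) (negRay γ₂ (-t₀)) = 0
    rw [h1, negRay_negRay]
    linarith
  have half2 := main_half hM (negRay γ) (isLine_negRay hγ) (hasUnique_negRay huniq)
    (negRay γ₁) (negRay γ₂) (isLine_negRay h₁) (isLine_negRay h₂)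
    (prec_negRay hp₁) (prec_negRay hp₂) (-t₀) hz'
  have half2' : ∀ t : ℝ, busemann (negRay γ₁) (γ₂ t) =
      busemann (negRay γ₁) (γ₂ 0) + t := by
    intro t
    have h := half2 (-t)
    have e1 : negRay γ₂ (-t) = γ₂ t := by simp [negRay]
    have e2 : negRay γ₂ 0 = γ₂ 0 := by simp [negRay]
    rw [e1, e2] at h
    linarith
  have hzz : busemann γ₁ (γ₂ t₀) + busemann (negRay γ₁) (γ₂ t₀) = 0 := hz
  constructor
  · have a1 := half1 t₀
    have a2 := half2' t₀
    linarith
  · intro t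
    exact ⟨half1 t, half2' t⟩
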